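/- arXiv:2410.21246 — 4 statements merged into one kernel-verified Lean document; each statement's English description precedes it below -/
import Mathlib

section
/- Let μ > 0 and μₙ > 0 be real numbers, let p ∈ [0,1] and set q = 1 − p. Let U be the 10×10 real matrix with nonzero off-diagonal entries U(1,3)=pμ, U(1,6)=μₙ; U(2,1)=qμ, U(2,3)=pμ, U(2,7)=μₙ; U(3,9)=μₙ; U(4,5)=μₙ, U(4,8)=pμ, U(4,10)=qμ; U(5,6)=qμ, U(5,9)=pμ; U(6,9)=pμ; U(7,6)=qμ, U(7,9)=pμ; U(8,9)=μₙ; U(10,6)=μₙ, U(10,8)=pμ, and diagonal entries U(1,1)=−(pμ+μₙ), U(2,2)=U(3,3)=U(4,4)=U(5,5)=−(μ+μₙ), U(6,6)=−(pμ+μₙ), U(7,7)=U(8,8)=U(9,9)=−(μ+μₙ), U(10,10)=−(pμ+μₙ). Let σ be the row vector σ = (1/(μₙ+pμ))·(qμₙ, pμₙ, 0, pμ, 0, 0, 0, 0, 0, 0) and let θ be the column vector with entries θᵢ = 1 for i ∈ {6,7,8,9,10} and θᵢ = 0 otherwise. Then σU⁻¹θ ≠ 0 and −(σU⁻²θ)/(σU⁻¹θ)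 = (p²μ²(2μₙ+μ) + pμ(2μₙ+μ)² + 2μₙ(μₙ+μ)²) / ((μₙ+μ)²(pμ+μₙ)²). -/
/-!
The transition graph of the absorbing Markov chain is acyclic apart from self-loops, so after
ordering the states topologically `U` is upper triangular; its determinant is the product
`(-(pμ + μₙ))³ (-(μ + μₙ))⁷` of its diagonal entries and `U` is invertible. Back-substitution
along that order gives `U⁻¹θ` and `U⁻²θ = U⁻¹(U⁻¹θ)` as explicit rational vectors, which only
have to be checked against `U x = θ` and `U y = x`. Contracting with `σ` gives
`σU⁻¹θ = -1/(pμ + μₙ)` and `σU⁻²θ = N / ((μₙ + μ)² (pμ + μₙ)³)`, with `N` the numerator of the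
mean AoI.
-/

/-- The 10×10 AMC sub-generator matrix of the probabilistic scheduler
sub-problem (rows/columns indexed 0–9 corresponding to states 1–10). -/
def psSubGenerator (μ μn p : ℝ) : Matrix (Fin 10) (Fin 10) ℝ :=
  let q := 1 - p
  !![-(p*μ+μn), 0, p*μ, 0, 0, μn, 0, 0, 0, 0;
     q*μ, -(μ+μn), p*μ, 0, 0, 0, μn, 0, 0, 0;
     0, 0, -(μ+μn), 0, 0, 0, 0, 0, μn, 0;
     0, 0, 0, -(μ+μn), μn, 0, 0, p*μ, 0, q*μ;
     0, 0, 0, 0, -(μ+μn), q*μ, 0, 0, p*μ, 0;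
     0, 0, 0, 0, 0, -(p*μ+μn), 0, 0, p*μ, 0;
     0, 0, 0, 0, 0, q*μ, -(μ+μn), 0, p*μ, 0;
     0, 0, 0, 0, 0, 0, 0, -(μ+μn), μn, 0;
     0, 0, 0, 0, 0, 0, 0, 0, -(μ+μn), 0;
     0, 0, 0, 0, 0, μn, 0, p*μ, 0, -(p*μ+μn)]

/-- The initial probability row vector σ of the transient states. -/
noncomputable def psSigma (μ μn p : ℝ) : Matrix (Fin 1) (Fin 10) ℝ :=
  let q := 1 - p
  !![q*μn/(μn+p*μ), p*μn/(μn+p*μ), 0, p*μ/(μn+p*μ), 0, 0, 0, 0, 0, 0]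

/-- The binary transient (column) vector θ, marking states 6–10. -/
def psTheta : Matrix (Fin 10) (Fin 1) ℝ :=
  !![0; 0; 0; 0; 0; 1; 1; 1; 1; 1]

theorem Matrix.det_eq_prod_diag_of_blockTriangular_equiv {m n R : Type*} [CommRing R]
    [Fintype m] [DecidableEq m] [Fintype n] [LinearOrder n] {M : Matrix m m R} (e : m ≃ n)
    (h : M.BlockTriangular e) : M.det = ∏ i, M i i := by
  rw [← Matrix.det_reindex_self e, Matrix.det_of_isUpperTriangular
    (Matrix.blockTriangular_reindex_iff.mpr h), ← e.prod_comp]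
  simp

/-- A topological order of the transition graph: every transition leads to a state of higher
rank. -/
def psRank : Fin 10 ≃ Fin 10 :=
  ⟨![2, 0, 7, 1, 4, 8, 5, 6, 9, 3], ![1, 3, 0, 9, 4, 6, 7, 2, 5, 8], by decide, by decide⟩

theorem psSubGenerator_blockTriangular (μ μn p : ℝ) :
    (psSubGenerator μ μn p).BlockTriangular psRank := by
  intro i j h
  fin_cases i <;> fin_cases j <;>
    first
      | exact absurd h (by decide)
      | simp [psSubGenerator]

theorem psSubGenerator_det_ne_zero {μ μn p : ℝ} (hb : μ + μn ≠ 0) (ha : p * μ + μn ≠ 0) :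
    (psSubGenerator μ μn p).det ≠ 0 := by
  rw [Matrix.det_eq_prod_diag_of_blockTriangular_equiv psRank
    (psSubGenerator_blockTriangular μ μn p)]
  refine Finset.prod_ne_zero_iff.mpr fun i _ => ?_
  fin_cases i <;>
    simpa only [psSubGenerator, Matrix.of_apply, Matrix.cons_val, Fin.reduceFinMk, ne_eq,
      neg_eq_zero]

noncomputable def psInvTheta (μ μn p : ℝ) : Matrix (Fin 10) (Fin 1) ℝ :=
  !![(-μn^3 - 2*μ*μn^2 - 2*μ*μn^2*p - μ^2*μn - μ^2*μn*p - μ^2*μn*p^2)/((μ+μn)^2*(p*μ+μn)^2);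
     (-μn^4 - 3*μ*μn^3 - 2*μ*μn^3*p - 3*μ^2*μn^2 - 3*μ^2*μn^2*p - μ^2*μn^2*p^2 - μ^3*μn - μ^3*μn*p - μ^3*μn*p^2)/((μ+μn)^3*(p*μ+μn)^2);
     (-μn)/((μ+μn)^2);
     (-3*μ*μn^3 - 5*μ^2*μn^2 - 2*μ^2*μn^2*p - 2*μ^3*μn - 3*μ^3*μn*p - μ^4*p)/((μ+μn)^3*(p*μ+μn)^2);
     (-μ*μn - μ^2)/((μ+μn)^2*(p*μ+μn));
     (-μn - μ - μ*p)/((μ+μn)*(p*μ+μn));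
     (-μn^2 - 2*μ*μn - μ*μn*p - μ^2 - μ^2*p)/((μ+μn)^2*(p*μ+μn));
     (-2*μn - μ)/((μ+μn)^2);
     (-1)/((μ+μn));
     (-2*μn^3 - 4*μ*μn^2 - 4*μ*μn^2*p - 2*μ^2*μn - 4*μ^2*μn*p - 2*μ^2*μn*p^2 - μ^3*p - μ^3*p^2)/((μ+μn)^2*(p*μ+μn)^2)]

noncomputable def psInvSqTheta (μ μn p : ℝ) : Matrix (Fin 10) (Fin 1) ℝ :=
  !![(2*μn^4 + 6*μ*μn^3 + 6*μ*μn^3*p + 6*μ^2*μn^2 + 6*μ^2*μn^2*p + 6*μ^2*μn^2*p^2 + 2*μ^3*μn + 2*μ^3*μn*p + 2*μ^3*μn*p^2 + 2*μ^3*μn*p^3)/((μ+μn)^3*(p*μ+μn)^3);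
     (2*μn^5 + 8*μ*μn^4 + 6*μ*μn^4*p + 12*μ^2*μn^3 + 12*μ^2*μn^3*p + 6*μ^2*μn^3*p^2 + 8*μ^3*μn^2 + 8*μ^3*μn^2*p + 8*μ^3*μn^2*p^2 + 2*μ^3*μn^2*p^3 + 2*μ^4*μn + 2*μ^4*μn*p + 2*μ^4*μn*p^2 + 2*μ^4*μn*p^3)/((μ+μn)^4*(p*μ+μn)^3);
     (2*μn)/((μ+μn)^3);
     (8*μ*μn^4 + 17*μ^2*μn^3 + 9*μ^2*μn^3*p + 12*μ^3*μn^2 + 15*μ^3*μn^2*p + 3*μ^3*μn^2*p^2 + 3*μ^4*μn + 7*μ^4*μn*p + 4*μ^4*μn*p^2 + μ^5*p + μ^5*p^2)/((μ+μn)^4*(p*μ+μn)^3);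
     (2*μ*μn^2 + 3*μ^2*μn + μ^2*μn*p + μ^3 + μ^3*p)/((μ+μn)^3*(p*μ+μn)^2);
     (μn^2 + 2*μ*μn + 2*μ*μn*p + μ^2 + μ^2*p + μ^2*p^2)/((μ+μn)^2*(p*μ+μn)^2);
     (μn^3 + 3*μ*μn^2 + 2*μ*μn^2*p + 3*μ^2*μn + 3*μ^2*μn*p + μ^2*μn*p^2 + μ^3 + μ^3*p + μ^3*p^2)/((μ+μn)^3*(p*μ+μn)^2);
     (3*μn + μ)/((μ+μn)^3);
     (1)/((μ+μn)^2);
     (3*μn^4 + 9*μ*μn^3 + 9*μ*μn^3*p + 9*μ^2*μn^2 + 12*μ^2*μn^2*p + 9*μ^2*μn^2*p^2 + 3*μ^3*μn + 6*μ^3*μn*p + 6*μ^3*μn*p^2 + 3*μ^3*μn*p^3 + μ^4*p + μ^4*p^2 + μ^4*p^3)/((μ+μn)^3*(p*μ+μn)^3)]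

theorem psSubGenerator_mul_psInvTheta {μ μn p : ℝ} (hb : μ + μn ≠ 0) (ha : p * μ + μn ≠ 0) :
    psSubGenerator μ μn p * psInvTheta μ μn p = psTheta := by
  have ha' : μ * p + μn ≠ 0 := by rwa [mul_comm]
  ext i j
  fin_cases i <;> fin_cases j <;>
    simp only [Matrix.mul_apply, Fin.sum_univ_succ, Fin.sum_univ_zero, psSubGenerator, psInvTheta,
      psTheta, Matrix.of_apply, Matrix.cons_val, Fin.reduceFinMk, Fin.reduceSucc] <;>
    field_simp <;> ring

theorem psSubGenerator_mul_psInvSqTheta {μ μn p : ℝ} (hb : μ + μn ≠ 0) (ha : p * μ + μn ≠ 0) :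
    psSubGenerator μ μn p * psInvSqTheta μ μn p = psInvTheta μ μn p := by
  have ha' : μ * p + μn ≠ 0 := by rwa [mul_comm]
  ext i j
  fin_cases i <;> fin_cases j <;>
    simp only [Matrix.mul_apply, Fin.sum_univ_succ, Fin.sum_univ_zero, psSubGenerator, psInvTheta,
      psInvSqTheta, Matrix.of_apply, Matrix.cons_val, Fin.reduceFinMk, Fin.reduceSucc] <;>
    field_simp <;> ring

theorem psSigma_mul_psInvTheta {μ μn p : ℝ} (hb : μ + μn ≠ 0) (ha : p * μ + μn ≠ 0) :
    (psSigma μ μn p * psInvTheta μ μn p) 0 0 = -1 / (p * μ + μn) := by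
  have ha' : μn + p * μ ≠ 0 := by rwa [add_comm]
  simp only [Matrix.mul_apply, Fin.sum_univ_succ, Fin.sum_univ_zero, psSigma, psInvTheta,
    Matrix.of_apply, Matrix.cons_val, Fin.reduceSucc]
  field_simp
  ring

theorem psSigma_mul_psInvSqTheta {μ μn p : ℝ} (hb : μ + μn ≠ 0) (ha : p * μ + μn ≠ 0) :
    (psSigma μ μn p * psInvSqTheta μ μn p) 0 0 =
     (p^2*μ^2*(2*μn+μ) + p*μ*(2*μn+μ)^2 + 2*μn*(μn+μ)^2) / ((μn+μ)^2*(p*μ+μn)^3) := by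
  have ha' : μn + p * μ ≠ 0 := by rwa [add_comm]
  have hb' : μn + μ ≠ 0 := by rwa [add_comm]
  simp only [Matrix.mul_apply, Fin.sum_univ_succ, Fin.sum_univ_zero, psSigma, psInvSqTheta,
    Matrix.of_apply, Matrix.cons_val, Fin.reduceSucc]
  field_simp
  ring

theorem ps_mean_aoi_closed_form (μ μn p : ℝ) (hμ : 0 < μ) (hμn : 0 < μn)
    (hp : p ∈ Set.Icc (0:ℝ) 1) :
    (psSigma μ μn p * (psSubGenerator μ μn p)⁻¹ * psTheta) 0 0 ≠ 0 ∧
    -((psSigma μ μn p * ((psSubGenerator μ μn p)⁻¹ * (psSubGenerator μ μn p)⁻¹)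
        * psTheta) 0 0) /
     ((psSigma μ μn p * (psSubGenerator μ μn p)⁻¹ * psTheta) 0 0) =
     (p^2*μ^2*(2*μn+μ) + p*μ*(2*μn+μ)^2 + 2*μn*(μn+μ)^2) /
        ((μn+μ)^2*(p*μ+μn)^2) := by
  have ha : 0 < p * μ + μn := by nlinarith [hp.1]
  have hb : 0 < μ + μn := by linarith
  set U := psSubGenerator μ μn p
  have hU : IsUnit U.det := (psSubGenerator_det_ne_zero hb.ne' ha.ne').isUnit
  have hX : U⁻¹ * psTheta = psInvTheta μ μn p := by
    rw [← psSubGenerator_mul_psInvTheta hb.ne' ha.ne', U.nonsing_inv_mul_cancel_left _ hU]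
  have hY : U⁻¹ * psInvTheta μ μn p = psInvSqTheta μ μn p := by
    rw [← psSubGenerator_mul_psInvSqTheta hb.ne' ha.ne', U.nonsing_inv_mul_cancel_left _ hU]
  simp only [Matrix.mul_assoc, hX, hY, psSigma_mul_psInvTheta hb.ne' ha.ne',
    psSigma_mul_psInvSqTheta hb.ne' ha.ne']
  refine ⟨by simp [ha.ne'], ?_⟩
  field_simp
end

section
/- Let N ≥ 1, let μ > 0, and for each n let wₙ > 0 and μₙ > 0 be real numbers. Then the function Δ̄(p₁,…,p_N) = Σₙ wₙ · (pₙ²μ²(2μₙ+μ) + pₙμ(2μₙ+μ)² + 2μₙ(μₙ+μ)²) / ((μₙ+μ)²(pₙμ+μₙ)²) is convex on the set {p ∈ ℝᴺ : pₙ ≥ 0 for all n}. -/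
/-!
Writing `y = p μ + μₙ`, the `n`-th summand is, by partial fractions in `y`, a nonnegative
combination of `1`, `y⁻¹` and `y⁻²`. These are convex on `y > 0`, and `p ↦ y` is affine and maps
`p ≥ 0` into `y > 0`; a nonnegatively weighted sum of convex functions of separate coordinates is
convex.
-/

open Set

section Sum

variable {𝕜 β ι : Type*} [Semiring 𝕜] [PartialOrder 𝕜]
  [AddCommMonoid β] [PartialOrder β] [IsOrderedAddMonoid β] [DistribMulAction 𝕜 β]

theorem ConvexOn.finset_sum {E : Type*} [AddCommMonoid E] [SMul 𝕜 E] {s : Set E}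
    (hs : Convex 𝕜 s) {t : Finset ι} {f : ι → E → β} (hf : ∀ i ∈ t, ConvexOn 𝕜 s (f i)) :
    ConvexOn 𝕜 s fun x => ∑ i ∈ t, f i x := by
  classical
  induction t using Finset.induction_on with
  | empty => exact ⟨hs, fun _ _ _ _ a b _ _ _ => by simp⟩
  | insert i t hi ih =>
    simp only [Finset.sum_insert hi]
    exact (hf i (Finset.mem_insert_self i t)).add
      (ih fun j hj => hf j (Finset.mem_insert_of_mem hj))

theorem convexOn_sum_apply {F : Type*} [AddCommMonoid F] [Module 𝕜 F] [Fintype ι]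
    {s : ι → Set F} {f : ι → F → β} (hf : ∀ i, ConvexOn 𝕜 (s i) (f i)) :
    ConvexOn 𝕜 {p : ι → F | ∀ i, p i ∈ s i} fun p => ∑ i, f i (p i) := by
  have hs : Convex 𝕜 {p : ι → F | ∀ i, p i ∈ s i} := by
    simpa only [← Set.mem_univ_pi, Set.ofPred_mem_eq] using convex_pi fun i _ => (hf i).1
  exact ConvexOn.finset_sum hs fun i _ =>
    ((hf i).comp_linearMap (LinearMap.proj (R := 𝕜) (φ := fun _ => F) i)).subset
      (fun p hp => hp i) hs

end Sum

theorem convexOn_const_add_mul_inv_add_mul_inv_sq {𝕜 : Type*} [Field 𝕜] [LinearOrder 𝕜]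
    [IsStrictOrderedRing 𝕜] (a : 𝕜) {b c : 𝕜} (hb : 0 ≤ b) (hc : 0 ≤ c) :
    ConvexOn 𝕜 (Ioi 0) fun y : 𝕜 => a + b * y⁻¹ + c * (y ^ 2)⁻¹ := by
  have hinv := (convexOn_zpow (𝕜 := 𝕜) (-1)).smul hb
  have hinv_sq := (convexOn_zpow (𝕜 := 𝕜) (-2)).smul hc
  simp only [zpow_neg, zpow_ofNat, pow_one, smul_eq_mul] at hinv hinv_sq
  exact ((convexOn_const a (convex_Ioi 0)).add hinv).add hinv_sq

/-- The mean AoI `E[Δₙ]` of a source with dedicated server rate `μₙ`, scheduled with probability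
`p` on the shared server of rate `μ`. -/
noncomputable def meanAoI (μ μₙ p : ℝ) : ℝ :=
  (p^2*μ^2*(2*μₙ+μ) + p*μ*(2*μₙ+μ)^2 + 2*μₙ*(μₙ+μ)^2) / ((μₙ+μ)^2*(p*μ+μₙ)^2)

theorem meanAoI_eq {μ μₙ p : ℝ} (hμ : μₙ + μ ≠ 0) (hy : p * μ + μₙ ≠ 0) :
    meanAoI μ μₙ p = (2*μₙ+μ) / (μₙ+μ)^2 + μ*(2*μₙ+μ) / (μₙ+μ)^2 * (p*μ+μₙ)⁻¹
      + μₙ*μ / (μₙ+μ) * ((p*μ+μₙ)^2)⁻¹ := by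
  unfold meanAoI
  field_simp
  ring

theorem convexOn_meanAoI {μ μₙ : ℝ} (hμ : 0 < μ) (hμₙ : 0 < μₙ) :
    ConvexOn ℝ (Ici 0) (meanAoI μ μₙ) := by
  set y : ℝ →ᵃ[ℝ] ℝ := AffineMap.lineMap μₙ (μₙ + μ)
  have hy : ∀ p, y p = p * μ + μₙ := fun p => by
    simp only [y, AffineMap.lineMap_apply_ring']
    ring
  have hy_pos : Ici 0 ⊆ y ⁻¹' Ioi 0 := fun p (hp : 0 ≤ p) => by
    rw [mem_preimage, hy, mem_Ioi]
    positivity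
  have hg := convexOn_const_add_mul_inv_add_mul_inv_sq ((2*μₙ+μ) / (μₙ+μ)^2)
    (b := μ*(2*μₙ+μ) / (μₙ+μ)^2) (c := μₙ*μ / (μₙ+μ)) (by positivity) (by positivity)
  refine ((hg.comp_affineMap y).subset hy_pos (convex_Ici 0)).congr fun p hp => ?_
  have hp : 0 ≤ p := hp
  rw [Function.comp_apply, hy]
  exact (meanAoI_eq (by positivity) (by positivity)).symm

theorem weighted_aoi_convexOn_general (N : ℕ)
    (μ : ℝ) (hμ : 0 < μ) (w μd : Fin N → ℝ)
    (hw : ∀ n, 0 < w n) (hμd : ∀ n, 0 < μd n) :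
    ConvexOn ℝ {p : Fin N → ℝ | ∀ n, 0 ≤ p n}
      (fun p => ∑ n, w n *
        (((p n)^2*μ^2*(2*μd n+μ) + p n*μ*(2*μd n+μ)^2 + 2*μd n*(μd n+μ)^2) /
          ((μd n+μ)^2*(p n*μ+μd n)^2))) :=
  convexOn_sum_apply (s := fun _ => Ici 0) fun n => (convexOn_meanAoI hμ (hμd n)).smul (hw n).le

theorem weighted_aoi_convexOn (N : ℕ) (hN : 1 ≤ N)
    (μ : ℝ) (hμ : 0 < μ) (w μd : Fin N → ℝ)
    (hw : ∀ n, 0 < w n) (hμd : ∀ n, 0 < μd n) :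
    ConvexOn ℝ {p : Fin N → ℝ | ∀ n, 0 ≤ p n}
      (fun p => ∑ n, w n *
        (((p n)^2*μ^2*(2*μd n+μ) + p n*μ*(2*μd n+μ)^2 + 2*μd n*(μd n+μ)^2) /
          ((μd n+μ)^2*(p n*μ+μd n)^2))) :=
  weighted_aoi_convexOn_general N μ hμ w μd hw hμd
end

section
/- Let N ≥ 1, let a₁,…,a_N, b₁,…,b_N be positive reals, let μ > 0 and μₙ > 0 for each n, and set η = μ + Σₙ μₙ. For λ > 0 let zₙ(λ) denote the unique positive root of λy³ − aₙy − 2bₙ = 0, and define g(λ) = Σₙ max{zₙ(λ), μₙ}. Then there exists a unique λ* > 0 such that g(λ*) = η. -/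
/-!
Each `zₙ` inverts the strictly decreasing bijection `y ↦ (aₙ y + 2 bₙ) / y³` of `(0, ∞)`, so it is
continuous and strictly decreasing from `∞` to `0`. Hence `g` is continuous, exceeds `η` for small
`λ` and equals `∑ μₙ < η` for large `λ`, which gives a root by the intermediate value theorem; and
`g` is strictly decreasing wherever it exceeds `∑ μₙ`, which gives uniqueness.
-/

open Set Filter Topology

/-- The multiplier `λ` for which `y > 0` is the positive root of `λ y³ - a y - 2 b = 0`. -/
noncomputable def rootMultiplier (a b y : ℝ) : ℝ := (a * y + 2 * b) / y ^ 3

def IsPosCubicRoot (a b : ℝ) (z : ℝ → ℝ) : Prop :=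
  ∀ lam : ℝ, 0 < lam → 0 < z lam ∧ lam * z lam ^ 3 - a * z lam - 2 * b = 0

section CubicRoot

variable {a b : ℝ}

lemma rootMultiplier_pos (ha : 0 ≤ a) (hb : 0 < b) {y : ℝ} (hy : 0 < y) :
    0 < rootMultiplier a b y := by
  unfold rootMultiplier
  positivity

lemma rootMultiplier_cubic_eq_zero {y : ℝ} (hy : y ≠ 0) :
    rootMultiplier a b y * y ^ 3 - a * y - 2 * b = 0 := by
  rw [rootMultiplier, div_mul_cancel₀ _ (pow_ne_zero 3 hy)]
  ring

/-- The cubic `f` of `λ₁` satisfies `f y₂ - f y₁ = (y₂ - y₁) (λ₁ (y₁² + y₁ y₂ + y₂²) - a)`, and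
`λ₁ y₁² > a` at a positive root `y₁` since `b > 0`. -/
lemma cubic_pos_of_root_lt (hb : 0 < b) {lam₁ lam₂ y₁ y₂ : ℝ} (hlam₁ : 0 < lam₁)
    (hlam : lam₁ ≤ lam₂) (hy₁ : 0 < y₁) (hy : y₁ < y₂) (h₁ : lam₁ * y₁ ^ 3 - a * y₁ - 2 * b = 0) :
    0 < lam₂ * y₂ ^ 3 - a * y₂ - 2 * b := by
  have ha : a < lam₁ * y₁ ^ 2 := by nlinarith [mul_pos hy₁ hb]
  nlinarith [mul_pos (sub_pos.2 hy) (sub_pos.2 ha), mul_pos hy₁ (hy₁.trans hy),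
    mul_nonneg (sub_nonneg.2 hlam) (pow_pos (hy₁.trans hy) 3).le,
    mul_pos (mul_pos hlam₁ (sub_pos.2 hy)) (mul_pos hy₁ (hy₁.trans hy)),
    mul_pos (mul_pos hlam₁ (sub_pos.2 hy)) (mul_pos (hy₁.trans hy) (hy₁.trans hy))]

variable {z : ℝ → ℝ}

lemma IsPosCubicRoot.eq_of_root (hz : IsPosCubicRoot a b z) (hb : 0 < b) {lam y : ℝ}
    (hlam : 0 < lam) (hy : 0 < y) (h : lam * y ^ 3 - a * y - 2 * b = 0) : z lam = y := by
  obtain ⟨hzpos, hzroot⟩ := hz lam hlam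
  rcases lt_trichotomy (z lam) y with hlt | heq | hgt
  · exact absurd h (cubic_pos_of_root_lt hb hlam le_rfl hzpos hlt hzroot).ne'
  · exact heq
  · exact absurd hzroot (cubic_pos_of_root_lt hb hlam le_rfl hy hgt h).ne'

lemma IsPosCubicRoot.apply_rootMultiplier (hz : IsPosCubicRoot a b z) (ha : 0 ≤ a) (hb : 0 < b)
    {y : ℝ} (hy : 0 < y) : z (rootMultiplier a b y) = y :=
  hz.eq_of_root hb (rootMultiplier_pos ha hb hy) hy (rootMultiplier_cubic_eq_zero hy.ne')

lemma IsPosCubicRoot.strictAntiOn (hz : IsPosCubicRoot a b z) (hb : 0 < b) :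
    StrictAntiOn z (Ioi 0) := by
  intro lam₁ hlam₁ lam₂ hlam₂ hlam
  obtain ⟨hz₁, h₁⟩ := hz lam₁ hlam₁
  obtain ⟨hz₂, h₂⟩ := hz lam₂ hlam₂
  by_contra! hle
  rcases hle.eq_or_lt with heq | hlt
  · rw [heq] at h₁
    nlinarith [mul_pos (sub_pos.2 hlam) (pow_pos hz₂ 3)]
  · exact (cubic_pos_of_root_lt hb hlam₁ hlam.le hz₁ hlt h₁).ne' h₂

/-- `z` is continuous because it is monotone with an interval as image; negation turns it into a
strictly monotone function, as the library lemma requires. -/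
lemma IsPosCubicRoot.continuousOn (hz : IsPosCubicRoot a b z) (ha : 0 ≤ a) (hb : 0 < b) :
    ContinuousOn z (Ioi 0) := by
  intro lam hlam
  have hmono : StrictMonoOn (-z) (Ioi 0) := fun _ h₁ _ h₂ h =>
    neg_lt_neg (hz.strictAntiOn hb h₁ h₂ h)
  have himage : Iio 0 ⊆ (-z) '' Ioi 0 := fun w hw =>
    ⟨rootMultiplier a b (-w), rootMultiplier_pos ha hb (neg_pos.2 hw), by
      simp only [Pi.neg_apply, hz.apply_rootMultiplier ha hb (neg_pos.2 hw), neg_neg]⟩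
  have hcont : ContinuousAt (-z) lam :=
    hmono.continuousAt_of_image_mem_nhds (Ioi_mem_nhds hlam)
      (mem_of_superset (Iio_mem_nhds (neg_neg_of_pos (hz lam hlam).1)) himage)
  simpa only [neg_neg] using hcont.neg.continuousWithinAt

lemma IsPosCubicRoot.eventually_lt_atTop (hz : IsPosCubicRoot a b z) (ha : 0 ≤ a) (hb : 0 < b)
    {c : ℝ} (hc : 0 < c) : ∀ᶠ lam in atTop, z lam < c := by
  filter_upwards [eventually_gt_atTop (rootMultiplier a b c)] with lam hlam
  have hc' := rootMultiplier_pos ha hb hc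
  simpa only [hz.apply_rootMultiplier ha hb hc] using
    hz.strictAntiOn hb hc' (hc'.trans hlam) hlam

end CubicRoot

section SumMax

variable {ι : Type*} [Fintype ι] {f : ι → ℝ → ℝ} {μd : ι → ℝ}

/-- Above its floor `∑ μd`, some term of the sum is not clipped, and that term keeps decreasing. -/
lemma strictAntiOn_sum_max {s : Set ℝ} (hf : ∀ i, StrictAntiOn (f i) s) :
    StrictAntiOn (fun l => ∑ i, max (f i l) (μd i))
      {l | l ∈ s ∧ ∑ i, μd i < ∑ i, max (f i l) (μd i)} := by
  rintro l₁ ⟨hl₁, hfloor⟩ l₂ ⟨hl₂, -⟩ hl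
  obtain ⟨j, hj⟩ : ∃ j, μd j < f j l₁ := by
    by_contra! hclip
    rw [Finset.sum_congr rfl fun i _ => max_eq_right (hclip i)] at hfloor
    exact hfloor.false
  refine Finset.sum_lt_sum (fun i _ => max_le_max_right _ (hf i hl₁ hl₂ hl).le)
    ⟨j, Finset.mem_univ j, ?_⟩
  rw [max_eq_left hj.le]
  exact max_lt (hf j hl₁ hl₂ hl) hj

lemma exists_sum_max_eq (hf : ∀ i, ContinuousOn (f i) (Ioi 0)) (hμd : ∀ i, 0 ≤ μd i)
    {η lamA : ℝ} (hη : ∑ i, μd i < η) (hlamA : 0 < lamA) {i₀ : ι} (hA : η ≤ f i₀ lamA)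
    (hB : ∀ᶠ lam in atTop, ∀ i, f i lam ≤ μd i) :
    ∃ lam, 0 < lam ∧ ∑ i, max (f i lam) (μd i) = η := by
  obtain ⟨lamB, hclip, hAB⟩ := (hB.and (eventually_gt_atTop lamA)).exists
  have hgA : η ≤ ∑ i, max (f i lamA) (μd i) :=
    calc η ≤ max (f i₀ lamA) (μd i₀) := hA.trans (le_max_left _ _)
      _ ≤ ∑ i, max (f i lamA) (μd i) :=
        Finset.single_le_sum (f := fun i => max (f i lamA) (μd i))
          (fun i _ => (hμd i).trans (le_max_right _ _)) (Finset.mem_univ i₀)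
  have hgB : ∑ i, max (f i lamB) (μd i) < η := by
    rwa [Finset.sum_congr rfl fun i _ => max_eq_right (hclip i)]
  have hcont : ContinuousOn (fun l => ∑ i, max (f i l) (μd i)) (Icc lamA lamB) :=
    continuousOn_finsetSum _ fun i _ =>
      ((hf i).sup continuousOn_const).mono fun l hl => hlamA.trans_le hl.1
  obtain ⟨lam, hlam, heq⟩ := intermediate_value_Icc' hAB.le hcont ⟨hgB.le, hgA⟩
  exact ⟨lam, hlamA.trans_le hlam.1, heq⟩

end SumMax

theorem waterfilling_unique_lambda (N : ℕ) (hN : 1 ≤ N)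
    (a b : Fin N → ℝ) (ha : ∀ n, 0 < a n) (hb : ∀ n, 0 < b n)
    (μ : ℝ) (hμ : 0 < μ) (μd : Fin N → ℝ) (hμd : ∀ n, 0 < μd n)
    (z : Fin N → ℝ → ℝ)
    (hz : ∀ n, ∀ lam : ℝ, 0 < lam →
      0 < z n lam ∧ lam * (z n lam)^3 - a n * (z n lam) - 2 * b n = 0) :
    ∃! lam : ℝ, 0 < lam ∧
      ∑ n, max (z n lam) (μd n) = μ + ∑ n, μd n := by
  have hroot (n : Fin N) : IsPosCubicRoot (a n) (b n) (z n) := hz n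
  have hfloor : ∑ n, μd n < μ + ∑ n, μd n := lt_add_of_pos_left _ hμ
  refine existsUnique_of_exists_of_unique ?_ ?_
  · let n₀ : Fin N := ⟨0, hN⟩
    have hη : 0 < μ + ∑ n, μd n := add_pos_of_pos_of_nonneg hμ
      (Finset.sum_nonneg fun n _ => (hμd n).le)
    exact exists_sum_max_eq (fun n => (hroot n).continuousOn (ha n).le (hb n))
      (fun n => (hμd n).le) hfloor (rootMultiplier_pos (ha n₀).le (hb n₀) hη)
      ((hroot n₀).apply_rootMultiplier (ha n₀).le (hb n₀) hη).ge
      (eventually_all.2 fun n =>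
        ((hroot n).eventually_lt_atTop (ha n).le (hb n) (hμd n)).mono fun _ => le_of_lt)
  · rintro l₁ l₂ ⟨hl₁, h₁⟩ ⟨hl₂, h₂⟩
    exact (strictAntiOn_sum_max fun n => (hroot n).strictAntiOn (hb n)).injOn
      ⟨hl₁, h₁ ▸ hfloor⟩ ⟨hl₂, h₂ ▸ hfloor⟩ (h₁.trans h₂.symm)
end

section
/- Let N ≥ 1, let a₁,…,a_N, b₁,…,b_N be positive reals, let μ > 0 and μₙ > 0 for each n, and set η = μ + Σₙ μₙ. For λ > 0 let zₙ(λ) denote the unique positive root of λy³ − aₙy − 2bₙ = 0, and let λ* > 0 be such that Σₙ max{zₙ(λ*), μₙ} = η. Then the vector y* with yₙ* = max{zₙ(λ*), μₙ} is the unique global minimizer of F(y) = Σₙ (aₙ/yₙ + bₙ/yₙ²) over the set {y ∈ ℝᴺ : yₙ ≥ μₙ for all n, Σₙ yₙ = η}. -/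
/-!
Attach the multiplier `λ*` to the constraint `∑ yₙ = η`. Coordinatewise, `t ↦ aₙ/t + bₙ/t² + λ* t`
is strictly convex on `t > 0`, and on `[μₙ, ∞)` its unique minimizer is `max (zₙ λ*) μₙ`: at `zₙ λ*`
the derivative vanishes by the defining cubic, and when `zₙ λ* < μₙ` the cubic is nonnegative at
`μₙ`, so the derivative is nonnegative there (the KKT condition with `γₙ ≥ 0`). Summing over `n`, the
multiplier terms agree for all feasible `y`, so `y*` is the unique minimizer.
-/

open Finset

theorem sum_lt_sum_of_lagrangian_lt {ι : Type*} [Fintype ι] (g : ι → ℝ → ℝ) (c : ℝ)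
    {x y : ι → ℝ} (hmin : ∀ i, y i ≠ x i → g i (x i) + c * x i < g i (y i) + c * y i)
    (hne : y ≠ x) (hsum : ∑ i, x i = ∑ i, y i) :
    ∑ i, g i (x i) < ∑ i, g i (y i) := by
  obtain ⟨j, hj⟩ := Function.ne_iff.mp hne
  have hlt : ∑ i, (g i (x i) + c * x i) < ∑ i, (g i (y i) + c * y i) := by
    refine sum_lt_sum (fun i _ => ?_) ⟨j, mem_univ j, hmin j hj⟩
    rcases eq_or_ne (y i) (x i) with h | h
    · rw [h]
    · exact (hmin i h).le
  rw [sum_add_distrib, sum_add_distrib, ← mul_sum, ← mul_sum, hsum] at hlt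
  linarith

section CubicCost

variable {a b lam z x t : ℝ}

theorem tangent_lt_div_add_div_sq (ha : 0 ≤ a) (hb : 0 < b) (hx : 0 < x) (ht : 0 < t)
    (hne : t ≠ x) :
    a / x + b / x ^ 2 - (a / x ^ 2 + 2 * b / x ^ 3) * (t - x) < a / t + b / t ^ 2 := by
  have hsq : 0 < (t - x) ^ 2 := sq_pos_of_ne_zero (sub_ne_zero.mpr hne)
  have hgap : a / t + b / t ^ 2 - (a / x + b / x ^ 2 - (a / x ^ 2 + 2 * b / x ^ 3) * (t - x))
      = (a * t * x * (t - x) ^ 2 + b * (t - x) ^ 2 * (2 * t + x)) / (t ^ 2 * x ^ 3) := by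
    field_simp
    ring
  have : 0 < a * t * x * (t - x) ^ 2 + b * (t - x) ^ 2 * (2 * t + x) := by positivity
  linarith [div_pos this (by positivity : 0 < t ^ 2 * x ^ 3)]

theorem slope_eq_of_cubic_root (hz : 0 < z) (hroot : lam * z ^ 3 - a * z - 2 * b = 0) :
    a / z ^ 2 + 2 * b / z ^ 3 = lam := by
  field_simp
  linarith

theorem slope_le_of_cubic_root_le (hz : 0 < z) (ha : 0 ≤ a) (hb : 0 ≤ b)
    (hroot : lam * z ^ 3 - a * z - 2 * b = 0) (hzx : z ≤ x) :
    a / x ^ 2 + 2 * b / x ^ 3 ≤ lam := by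
  have hx : 0 < x := hz.trans_le hzx
  have hlam_z : a ≤ lam * z ^ 2 := by nlinarith
  have hcubic : a * x + 2 * b ≤ lam * x ^ 3 := by
    have hlam : 0 ≤ lam := nonneg_of_mul_nonneg_left (ha.trans hlam_z) (by positivity)
    have : a ≤ lam * (x ^ 2 + x * z + z ^ 2) := by nlinarith [mul_pos hx hz]
    nlinarith [mul_nonneg (sub_nonneg.mpr hzx) (sub_nonneg.mpr this)]
  rw [div_add_div _ _ (by positivity) (by positivity), div_le_iff₀ (by positivity)]
  nlinarith [pow_pos hx 2]

theorem lagrangian_lt_of_ne_max {m : ℝ} (ha : 0 ≤ a) (hb : 0 < b) (hz : 0 < z) (hm : 0 < m)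
    (hroot : lam * z ^ 3 - a * z - 2 * b = 0) (hmt : m ≤ t) (hne : t ≠ max z m) :
    a / max z m + b / max z m ^ 2 + lam * max z m < a / t + b / t ^ 2 + lam * t := by
  have hkkt : 0 ≤ (lam - (a / max z m ^ 2 + 2 * b / max z m ^ 3)) * (t - max z m) := by
    rcases le_total z m with h | h
    · rw [max_eq_right h]
      exact mul_nonneg (sub_nonneg.mpr (slope_le_of_cubic_root_le hz ha hb.le hroot h))
        (sub_nonneg.mpr hmt)
    · rw [max_eq_left h, slope_eq_of_cubic_root hz hroot, sub_self, zero_mul]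
  have := tangent_lt_div_add_div_sq ha hb (hz.trans_le (le_max_left z m))
    (hm.trans_le hmt) hne
  linarith

end CubicCost

theorem waterfilling_correctness_general (N : ℕ)
    (a b : Fin N → ℝ) (ha : ∀ n, 0 < a n) (hb : ∀ n, 0 < b n)
    (μ : ℝ) (μd : Fin N → ℝ) (hμd : ∀ n, 0 < μd n)
    (z : Fin N → ℝ → ℝ)
    (hz : ∀ n, ∀ lam : ℝ, 0 < lam →
      0 < z n lam ∧ lam * (z n lam)^3 - a n * (z n lam) - 2 * b n = 0)
    (lamStar : ℝ) (hlam : 0 < lamStar)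
    (hsum : ∑ n, max (z n lamStar) (μd n) = μ + ∑ n, μd n) :
    let yStar : Fin N → ℝ := fun n => max (z n lamStar) (μd n)
    ((∀ n, μd n ≤ yStar n) ∧ ∑ n, yStar n = μ + ∑ n, μd n) ∧
    ∀ y : Fin N → ℝ, (∀ n, μd n ≤ y n) → ∑ n, y n = μ + ∑ n, μd n →
      y ≠ yStar →
      ∑ n, (a n / yStar n + b n / (yStar n)^2) <
        ∑ n, (a n / y n + b n / (y n)^2) := by
  intro yStar
  refine ⟨⟨fun n => le_max_right _ _, hsum⟩, fun y hy hysum hne => ?_⟩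
  refine sum_lt_sum_of_lagrangian_lt (fun n t => a n / t + b n / t ^ 2) lamStar
    (fun n hn => ?_) hne (hsum.trans hysum.symm)
  obtain ⟨hzpos, hroot⟩ := hz n lamStar hlam
  exact lagrangian_lt_of_ne_max (ha n).le (hb n) hzpos (hμd n) hroot (hy n) hn

theorem waterfilling_correctness (N : ℕ) (hN : 1 ≤ N)
    (a b : Fin N → ℝ) (ha : ∀ n, 0 < a n) (hb : ∀ n, 0 < b n)
    (μ : ℝ) (hμ : 0 < μ) (μd : Fin N → ℝ) (hμd : ∀ n, 0 < μd n)
    (z : Fin N → ℝ → ℝ)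
    (hz : ∀ n, ∀ lam : ℝ, 0 < lam →
      0 < z n lam ∧ lam * (z n lam)^3 - a n * (z n lam) - 2 * b n = 0)
    (lamStar : ℝ) (hlam : 0 < lamStar)
    (hsum : ∑ n, max (z n lamStar) (μd n) = μ + ∑ n, μd n) :
    let yStar : Fin N → ℝ := fun n => max (z n lamStar) (μd n)
    ((∀ n, μd n ≤ yStar n) ∧ ∑ n, yStar n = μ + ∑ n, μd n) ∧
    ∀ y : Fin N → ℝ, (∀ n, μd n ≤ y n) → ∑ n, y n = μ + ∑ n, μd n →
      y ≠ yStar →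
      ∑ n, (a n / yStar n + b n / (yStar n)^2) <
        ∑ n, (a n / y n + b n / (y n)^2) :=
  waterfilling_correctness_general N a b ha hb μ μd hμd z hz lamStar hlam hsum
end
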